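/- Let k be a field and V a virtually tame correspondence module over (ℝ, ≤). Let I₁ ⊆ I₂ ⊆ I₃ ⊆ ⋯ be an ascending sequence of intervals of ℝ, I an interval with ⋃_n I_n ⊆ I, and A ⊆ I a finite set. Then there exists m₀ such that for all m ≥ m₀: for every section s of V over I with s(t) = 0 for all t ∈ I_m, there is a section g of V over I with g(t) = 0 for all t ∈ ⋃_n I_n and g(t) = s(t) for all t ∈ A. -/

import Mathlib

/-- Composition of correspondences (as sets of pairs): first `C`, then `D`. -/
def CorrComp {U V W : Type*} (C : Set (U × V)) (D : Set (V × W)) : Set (U × W) :=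
  {p : U × W | ∃ v : V, (p.1, v) ∈ C ∧ (v, p.2) ∈ D}

/-- A chain of sets is stable (eventually constant). -/
def EvConst {α : Type*} (c : ℕ → Set α) : Prop := ∃ N : ℕ, ∀ n ≥ N, c n = c N


lemma exists_least_aux {ι X κ : Type*} [LinearOrder κ] (C : ι → Set X) (ord : ι → κ) (i₁ : ι)
    (hmono : ∀ i j, ord i ≤ ord j → C j ⊆ C i)
    (hnd : ∀ f : ℕ → ι, (∀ a b : ℕ, a ≤ b → ord (f a) ≤ ord (f b)) →
      (∀ n, C (f (n + 1)) ⊂ C (f n)) → False) :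
    ∃ i₀, ∀ i, C i₀ ⊆ C i := by
  by_contra hc
  push_neg at hc
  choose step hstep using hc
  have hss : ∀ i, C (step i) ⊂ C i := by
    intro i
    rcases le_total (ord i) (ord (step i)) with hh | hh
    · refine (hmono i (step i) hh).ssubset_of_ne ?_
      intro e
      exact hstep i (e ▸ Set.Subset.refl _)
    · exact absurd (hmono (step i) i hh) (hstep i)
  set f : ℕ → ι := fun n => step^[n] i₁ with hfdef
  have hf : ∀ n, f (n + 1) = step (f n) := fun n => Function.iterate_succ_apply' step n i₁
  have h1 : ∀ n, C (f (n + 1)) ⊂ C (f n) := fun n => by rw [hf]; exact hss (f n)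
  have hstep2 : ∀ n, ord (f n) ≤ ord (f (n + 1)) := by
    intro n
    by_contra hlt
    exact (h1 n).not_subset (hmono (f (n + 1)) (f n) (le_of_not_ge hlt))
  exact hnd f (fun a b hab => monotone_nat_of_le_succ hstep2 hab) h1

section slices

variable {k : Type*} [Field k]

lemma slice_left_imp {α β γ : Type*} [AddCommGroup α] [Module k α] [AddCommGroup β] [Module k β]
    [AddCommGroup γ] [Module k γ]
    (P : Submodule k (α × γ)) (Q : Submodule k (β × γ)) (x : α) (x' : β) (y₀ : γ)
    (h₀ : (x, y₀) ∈ P) (h₀' : (x', y₀) ∈ Q)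
    (hker : ∀ d : γ, ((0 : α), d) ∈ P → ((0 : β), d) ∈ Q) :
    ∀ y : γ, (x, y) ∈ P → (x', y) ∈ Q := by
  intro y h
  have hd : ((0 : α), y - y₀) ∈ P := by
    have := P.sub_mem h h₀
    simpa using this
  have := Q.add_mem h₀' (hker _ hd)
  simpa using this

lemma slice_right_imp {α β γ : Type*} [AddCommGroup α] [Module k α] [AddCommGroup β] [Module k β]
    [AddCommGroup γ] [Module k γ]
    (P : Submodule k (γ × α)) (Q : Submodule k (γ × β)) (z : α) (z' : β) (y₀ : γ)
    (h₀ : (y₀, z) ∈ P) (h₀' : (y₀, z') ∈ Q)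
    (hker : ∀ d : γ, (d, (0 : α)) ∈ P → (d, (0 : β)) ∈ Q) :
    ∀ y : γ, (y, z) ∈ P → (y, z') ∈ Q := by
  intro y h
  have hd : (y - y₀, (0 : α)) ∈ P := by
    have := P.sub_mem h h₀
    simpa using this
  have := Q.add_mem h₀' (hker _ hd)
  simpa using this

end slices

section

variable {k : Type*} [Field k] (V : ℝ → Type*)
  [∀ t, AddCommGroup (V t)] [∀ t, Module k (V t)]
  (v : ∀ s t : ℝ, s ≤ t → Submodule k (V s × V t))

/-- `f` is a section of the correspondence module `(V, v)` over `A ⊆ ℝ`. -/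
def IsSection (A : Set ℝ) (f : ∀ t : ℝ, V t) : Prop :=
  ∀ r ∈ A, ∀ t ∈ A, ∀ hrt : r ≤ t, (f r, f t) ∈ v r t hrt

/-- The descending chain condition on images (at every `t ∈ ℝ`). -/
def DCConImages : Prop :=
  ∀ t : ℝ,
    (∀ (l : ℕ → ℝ) (hl : ∀ n, l n ≤ t), Antitone l →
      EvConst (fun n => {y : V t | ∃ x : V (l n), (x, y) ∈ v (l n) t (hl n)})) ∧
    (∀ (u : ℕ → ℝ) (hu : ∀ n, t ≤ u n), Monotone u →
      EvConst (fun n => {x : V t | ∃ y : V (u n), (x, y) ∈ v t (u n) (hu n)}))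

/-- The descending chain condition on kernels (at every `t ∈ ℝ`). -/
def DCConKernels : Prop :=
  ∀ t : ℝ,
    (∀ (u : ℕ → ℝ) (hu : ∀ n, t ≤ u n), Antitone u →
      EvConst (fun n => {x : V t | (x, (0 : V (u n))) ∈ v t (u n) (hu n)})) ∧
    (∀ (l : ℕ → ℝ) (hl : ∀ n, l n ≤ t), Monotone l →
      EvConst (fun n => {y : V t | ((0 : V (l n)), y) ∈ v (l n) t (hl n)}))

/-- A correspondence module is virtually tame if it satisfies the DCC on images and
on kernels at every `t ∈ ℝ`. -/
def VirtuallyTame : Prop := DCConImages V v ∧ DCConKernels V v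


variable {V v}

lemma comp_mem
    (hv_comp : ∀ (r s t : ℝ) (hrs : r ≤ s) (hst : s ≤ t),
      (v r t (hrs.trans hst) : Set (V r × V t)) =
        CorrComp (v r s hrs : Set (V r × V s)) (v s t hst : Set (V s × V t)))
    {r s t : ℝ} (hrs : r ≤ s) (hst : s ≤ t) (hrt : r ≤ t)
    {x : V r} {y : V s} {z : V t} (h1 : (x, y) ∈ v r s hrs) (h2 : (y, z) ∈ v s t hst) :
    (x, z) ∈ v r t hrt := by
  have hmem : (x, z) ∈ (v r t (hrs.trans hst) : Set (V r × V t)) := by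
    rw [hv_comp r s t hrs hst]; exact ⟨y, h1, h2⟩
  exact hmem

lemma comp_decomp
    (hv_comp : ∀ (r s t : ℝ) (hrs : r ≤ s) (hst : s ≤ t),
      (v r t (hrs.trans hst) : Set (V r × V t)) =
        CorrComp (v r s hrs : Set (V r × V s)) (v s t hst : Set (V s × V t)))
    {r s t : ℝ} (hrs : r ≤ s) (hst : s ≤ t) (hrt : r ≤ t)
    {x : V r} {z : V t} (hm : (x, z) ∈ v r t hrt) :
    ∃ y : V s, (x, y) ∈ v r s hrs ∧ (y, z) ∈ v s t hst := by
  have hmem : (x, z) ∈ (v r t (hrs.trans hst) : Set (V r × V t)) := hm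
  rw [hv_comp r s t hrs hst] at hmem
  exact hmem

lemma id_eq' (hv_id : ∀ t : ℝ, (v t t le_rfl : Set (V t × V t)) = {p | p.2 = p.1})
    {t : ℝ} {x y : V t} (hle : t ≤ t) (hm : (x, y) ∈ v t t hle) : y = x := by
  have hmem : (x, y) ∈ (v t t le_rfl : Set (V t × V t)) := hm
  rw [hv_id t] at hmem
  exact hmem

lemma id_mem' (hv_id : ∀ t : ℝ, (v t t le_rfl : Set (V t × V t)) = {p | p.2 = p.1})
    {t : ℝ} (x : V t) (hle : t ≤ t) : (x, x) ∈ v t t hle := by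
  have hmem : (x, x) ∈ (v t t le_rfl : Set (V t × V t)) := by rw [hv_id t]; exact rfl
  exact hmem

lemma zero_pair {r t : ℝ} (hrt : r ≤ t) : ((0 : V r), (0 : V t)) ∈ v r t hrt :=
  (v r t hrt).zero_mem

lemma extend_section
    (hv_id : ∀ t : ℝ, (v t t le_rfl : Set (V t × V t)) = {p | p.2 = p.1})
    (hv_comp : ∀ (r s t : ℝ) (hrs : r ≤ s) (hst : s ≤ t),
      (v r t (hrs.trans hst) : Set (V r × V t)) =
        CorrComp (v r s hrs : Set (V r × V s)) (v s t hst : Set (V s × V t)))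
    (htame : VirtuallyTame V v)
    (J : Set ℝ) (B : Set ℝ) (hBJ : B ⊆ J) (h : ∀ t : ℝ, V t)
    (hcompat : ∀ r ∈ B, ∀ t ∈ B, ∀ hrt : r ≤ t, (h r, h t) ∈ v r t hrt)
    (htwo : ∀ t ∈ J, t ∉ B → (∃ b ∈ B, b < t) ∧ ∃ b ∈ B, t < b) :
    ∃ g : ∀ t : ℝ, V t, IsSection V v J g ∧ ∀ t ∈ B, g t = h t := by
  classical
  set α := (t : ℝ) × V t with hα
  set S : Set (Set α) :=
    {M | (∀ p ∈ M, ∀ q ∈ M, ∀ hpq : p.1 ≤ q.1, (p.2, q.2) ∈ v p.1 q.1 hpq) ∧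
      (∀ p ∈ M, p.1 ∈ J) ∧ ∀ t ∈ B, (⟨t, h t⟩ : α) ∈ M} with hS
  have hM₀ : {p : α | p.1 ∈ B ∧ p.2 = h p.1} ∈ S := by
    refine ⟨?_, ?_, ?_⟩
    · rintro ⟨r, x⟩ ⟨hrB, hx⟩ ⟨t, y⟩ ⟨htB, hy⟩ hpq
      dsimp at hx hy hpq ⊢
      rw [hx, hy]
      exact hcompat r hrB t htB hpq
    · exact fun p hp => hBJ hp.1
    · exact fun t ht => ⟨ht, rfl⟩
  obtain ⟨M, hM₀M, hMmax⟩ := zorn_subset_nonempty S (by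
    intro c hcS hchain hcne
    refine ⟨⋃₀ c, ⟨?_, ?_, ?_⟩, fun s hs => Set.subset_sUnion_of_mem hs⟩
    · rintro p ⟨M₁, hM₁, hp⟩ q ⟨M₂, hM₂, hq⟩ hpq
      rcases hchain.total hM₁ hM₂ with hsub | hsub
      · exact (hcS hM₂).1 p (hsub hp) q hq hpq
      · exact (hcS hM₁).1 p hp q (hsub hq) hpq
    · rintro p ⟨M₁, hM₁, hp⟩
      exact (hcS hM₁).2.1 p hp
    · intro t ht
      obtain ⟨M₁, hM₁⟩ := hcne
      exact ⟨M₁, hM₁, (hcS hM₁).2.2 t ht⟩) _ hM₀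
  have hMS : M ∈ S := hMmax.1
  obtain ⟨hMc, hMJ, hMB⟩ := hMS
  -- domain of M is all of J
  have hdom : ∀ t ∈ J, ∃ y : V t, (⟨t, y⟩ : α) ∈ M := by
    by_contra hcon
    push_neg at hcon
    obtain ⟨t, htJ, hno⟩ := hcon
    have htB : t ∉ B := fun hB => hno (h t) (hMB t hB)
    obtain ⟨⟨b₁, hb₁B, hb₁lt⟩, b₂, hb₂B, hb₂gt⟩ := htwo t htJ htB
    have hnet : ∀ p ∈ M, p.1 ≠ t := by
      rintro ⟨r, x⟩ hp he
      dsimp at he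
      subst he
      exact hno x hp
    -- index types
    set ι₁ := {p : α // p ∈ M ∧ p.1 < t} with hι₁
    set ι₂ := {p : α // p ∈ M ∧ t < p.1} with hι₂
    set C₁ : ι₁ → Set (V t) := fun p => {y | (p.1.2, y) ∈ v p.1.1 t p.2.2.le} with hC₁
    set C₂ : ι₂ → Set (V t) := fun q => {y | (y, q.1.2) ∈ v t q.1.1 q.2.2.le} with hC₂
    have i₁ : ι₁ := ⟨⟨b₁, h b₁⟩, hMB b₁ hb₁B, hb₁lt⟩
    have i₂ : ι₂ := ⟨⟨b₂, h b₂⟩, hMB b₂ hb₂B, hb₂gt⟩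
    have hpair : ∀ (p : ι₁) (q : ι₂), ∃ y, y ∈ C₁ p ∧ y ∈ C₂ q := by
      intro p q
      have hm := hMc p.1 p.2.1 q.1 q.2.1 (p.2.2.le.trans q.2.2.le)
      obtain ⟨y, hy1, hy2⟩ := comp_decomp hv_comp p.2.2.le q.2.2.le _ hm
      exact ⟨y, hy1, hy2⟩
    -- least element on the left
    have hmono₁ : ∀ p p' : ι₁, p.1.1 ≤ p'.1.1 → C₁ p' ⊆ C₁ p := by
      intro p p' hle y hy
      exact comp_mem hv_comp hle p'.2.2.le p.2.2.le (hMc p.1 p.2.1 p'.1 p'.2.1 hle) hy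
    have hL₁ : ∃ p₀ : ι₁, ∀ p : ι₁, C₁ p₀ ⊆ C₁ p := by
      refine exists_least_aux C₁ (fun p => p.1.1) i₁ hmono₁ ?_
      intro f hfm hfs
      have hl : ∀ n, (f n).1.1 ≤ t := fun n => (f n).2.2.le
      obtain ⟨N, hN⟩ := (htame.2 t).2 (fun n => (f n).1.1) hl (fun a b hab => hfm a b hab)
      have hNeq := hN (N + 1) (by omega)
      have hker : ∀ d : V t,
          ((0 : V (f (N + 1)).1.1), d) ∈ v (f (N + 1)).1.1 t (hl (N + 1)) →
          ((0 : V (f N).1.1), d) ∈ v (f N).1.1 t (hl N) :=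
        fun d hd => (Set.ext_iff.mp hNeq d).mp hd
      have hker' : ∀ d : V t,
          ((0 : V (f N).1.1), d) ∈ v (f N).1.1 t (hl N) →
          ((0 : V (f (N + 1)).1.1), d) ∈ v (f (N + 1)).1.1 t (hl (N + 1)) :=
        fun d hd => (Set.ext_iff.mp hNeq d).mpr hd
      obtain ⟨y₀, hy₀A, _⟩ := hpair (f (N + 1)) i₂
      have hy₀' : y₀ ∈ C₁ (f N) := (hfs N).subset hy₀A
      have heq : C₁ (f (N + 1)) = C₁ (f N) := by
        ext y
        constructor
        · intro hy
          exact slice_left_imp (v (f (N + 1)).1.1 t (hl (N + 1))) (v (f N).1.1 t (hl N))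
            _ _ y₀ hy₀A hy₀' hker y hy
        · intro hy
          exact slice_left_imp (v (f N).1.1 t (hl N)) (v (f (N + 1)).1.1 t (hl (N + 1)))
            _ _ y₀ hy₀' hy₀A hker' y hy
      exact (hfs N).ne heq
    -- least element on the right
    have hmono₂ : ∀ q q' : ι₂, -q.1.1 ≤ -q'.1.1 → C₂ q' ⊆ C₂ q := by
      intro q q' hle y hy
      have hle' : q'.1.1 ≤ q.1.1 := by linarith
      exact comp_mem hv_comp q'.2.2.le hle' q.2.2.le hy
        (hMc q'.1 q'.2.1 q.1 q.2.1 hle')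
    have hL₂ : ∃ q₀ : ι₂, ∀ q : ι₂, C₂ q₀ ⊆ C₂ q := by
      refine exists_least_aux C₂ (fun q => -q.1.1) i₂ hmono₂ ?_
      intro f hfm hfs
      have hu : ∀ n, t ≤ (f n).1.1 := fun n => (f n).2.2.le
      have hanti : Antitone (fun n => (f n).1.1) := by
        intro a b hab
        have := hfm a b hab
        linarith
      obtain ⟨N, hN⟩ := (htame.2 t).1 (fun n => (f n).1.1) hu hanti
      have hNeq := hN (N + 1) (by omega)
      have hker : ∀ d : V t,
          (d, (0 : V (f (N + 1)).1.1)) ∈ v t (f (N + 1)).1.1 (hu (N + 1)) →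
          (d, (0 : V (f N).1.1)) ∈ v t (f N).1.1 (hu N) :=
        fun d hd => (Set.ext_iff.mp hNeq d).mp hd
      have hker' : ∀ d : V t,
          (d, (0 : V (f N).1.1)) ∈ v t (f N).1.1 (hu N) →
          (d, (0 : V (f (N + 1)).1.1)) ∈ v t (f (N + 1)).1.1 (hu (N + 1)) :=
        fun d hd => (Set.ext_iff.mp hNeq d).mpr hd
      obtain ⟨y₀, _, hy₀B⟩ := hpair i₁ (f (N + 1))
      have hy₀' : y₀ ∈ C₂ (f N) := (hfs N).subset hy₀B
      have heq : C₂ (f (N + 1)) = C₂ (f N) := by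
        ext y
        constructor
        · intro hy
          exact slice_right_imp (v t (f (N + 1)).1.1 (hu (N + 1))) (v t (f N).1.1 (hu N))
            _ _ y₀ hy₀B hy₀' hker y hy
        · intro hy
          exact slice_right_imp (v t (f N).1.1 (hu N)) (v t (f (N + 1)).1.1 (hu (N + 1)))
            _ _ y₀ hy₀' hy₀B hker' y hy
      exact (hfs N).ne heq
    obtain ⟨p₀, hp₀⟩ := hL₁
    obtain ⟨q₀, hq₀⟩ := hL₂
    obtain ⟨y, hyA, hyB⟩ := hpair p₀ q₀
    have hM' : insert (⟨t, y⟩ : α) M ∈ S := by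
      refine ⟨?_, ?_, ?_⟩
      · rintro p hp q hq hpq
        rcases Set.mem_insert_iff.mp hp with hp' | hp' <;>
          rcases Set.mem_insert_iff.mp hq with hq' | hq'
        · subst hp'; subst hq'
          exact id_mem' hv_id y hpq
        · subst hp'
          have hlt : t < q.1 := lt_of_le_of_ne hpq (Ne.symm (hnet q hq'))
          exact hq₀ ⟨q, hq', hlt⟩ hyB
        · subst hq'
          have hlt : p.1 < t := lt_of_le_of_ne hpq (hnet p hp')
          exact hp₀ ⟨p, hp', hlt⟩ hyA
        · exact hMc p hp' q hq' hpq
      · rintro p hp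
        rcases Set.mem_insert_iff.mp hp with hp' | hp'
        · subst hp'; exact htJ
        · exact hMJ p hp'
      · intro b hb
        exact Set.mem_insert_of_mem _ (hMB b hb)
    have hsub := hMmax.2 hM' (Set.subset_insert _ _)
    exact hno y (hsub (Set.mem_insert _ _))
  -- define g
  set g : ∀ t : ℝ, V t := fun t =>
    if ht : ∃ y : V t, (⟨t, y⟩ : α) ∈ M then ht.choose else h t with hg
  have hgmem : ∀ t ∈ J, (⟨t, g t⟩ : α) ∈ M := by
    intro t ht
    have he := hdom t ht
    have : g t = he.choose := by rw [hg]; exact dif_pos he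
    rw [this]
    exact he.choose_spec
  have huniq : ∀ (t : ℝ) (y : V t), t ∈ J → (⟨t, y⟩ : α) ∈ M → g t = y := by
    intro t y ht hy
    have h1 := hMc ⟨t, g t⟩ (hgmem t ht) ⟨t, y⟩ hy le_rfl
    exact (id_eq' hv_id le_rfl h1).symm
  refine ⟨g, ?_, ?_⟩
  · intro r hr t ht hrt
    exact hMc ⟨r, g r⟩ (hgmem r hr) ⟨t, g t⟩ (hgmem t ht) hrt
  · intro t ht
    exact huniq t (h t) (hBJ ht) (hMB t ht)


/-- Let `V` be a virtually tame correspondence module over `(ℝ, ≤)`,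
`I₁ ⊆ I₂ ⊆ ⋯` an ascending sequence of intervals, `J` an interval containing `⋃ n, I n`, and
`A ⊆ J` a finite set.  Then for all sufficiently large `m`: every section over `J` vanishing
on `I m` agrees on `A` with some section over `J` vanishing on all of `⋃ n, I n`. -/
theorem virtuallyTame_kernels_restricted_to_finite_set_stabilize
    (hv_id : ∀ t : ℝ, (v t t le_rfl : Set (V t × V t)) = {p | p.2 = p.1})
    (hv_comp : ∀ (r s t : ℝ) (hrs : r ≤ s) (hst : s ≤ t),
      (v r t (hrs.trans hst) : Set (V r × V t)) =
        CorrComp (v r s hrs : Set (V r × V s)) (v s t hst : Set (V s × V t)))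
    (htame : VirtuallyTame V v)
    (I : ℕ → Set ℝ) (hImono : Monotone I) (hIint : ∀ n, (I n).OrdConnected)
    (J : Set ℝ) (hJ : J.OrdConnected) (hIJ : (⋃ n, I n) ⊆ J)
    (A : Set ℝ) (hA : A ⊆ J) (hAfin : A.Finite) :
    ∃ m₀ : ℕ, ∀ m ≥ m₀, ∀ s : ∀ t : ℝ, V t, IsSection V v J s →
      (∀ t ∈ I m, s t = 0) →
      ∃ g : ∀ t : ℝ, V t, IsSection V v J g ∧
        (∀ t ∈ ⋃ n, I n, g t = 0) ∧ ∀ t ∈ A, g t = s t := by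
  classical
  set U : Set ℝ := ⋃ n, I n with hUdef
  by_cases hUne : U.Nonempty
  case neg =>
    refine ⟨0, fun m _ s hsec hs0 => ⟨s, hsec, ?_, fun t _ => rfl⟩⟩
    intro t ht
    exact absurd ⟨t, ht⟩ hUne
  obtain ⟨u₀, hu₀⟩ := hUne
  have hUJ : U ⊆ J := hIJ
  have hUord : ∀ x ∈ U, ∀ y ∈ U, ∀ z : ℝ, x ≤ z → z ≤ y → z ∈ U := by
    intro x hx y hy z hxz hzy
    obtain ⟨n1, hx1⟩ := Set.mem_iUnion.mp hx
    obtain ⟨n2, hy2⟩ := Set.mem_iUnion.mp hy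
    exact Set.mem_iUnion.mpr ⟨max n1 n2,
      (hIint (max n1 n2)).out (hImono (le_max_left n1 n2) hx1)
        (hImono (le_max_right n1 n2) hy2) ⟨hxz, hzy⟩⟩
  set L : Set ℝ := {x | x ∈ J ∧ x ∉ U ∧ ∀ u ∈ U, x < u} with hLdef
  set R : Set ℝ := {x | x ∈ J ∧ x ∉ U ∧ ∀ u ∈ U, u < x} with hRdef
  have hLU : ∀ x ∈ L, ∀ u ∈ U, x < u := fun x hx => hx.2.2
  have hRU : ∀ x ∈ R, ∀ u ∈ U, u < x := fun x hx => hx.2.2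
  have hLJ : L ⊆ J := fun x hx => hx.1
  have hRJ : R ⊆ J := fun x hx => hx.1
  have hLR : ∀ x ∈ L, ∀ y ∈ R, x < y := fun x hx y hy =>
    (hx.2.2 u₀ hu₀).trans (hy.2.2 u₀ hu₀)
  have htri : ∀ x ∈ J, x ∉ U → x ∈ L ∨ x ∈ R := by
    intro x hxJ hxU
    by_cases hl : ∀ u ∈ U, x < u
    · exact Or.inl ⟨hxJ, hxU, hl⟩
    · push_neg at hl
      obtain ⟨u1, hu1U, hu1le⟩ := hl
      refine Or.inr ⟨hxJ, hxU, fun u huU => ?_⟩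
      rcases lt_or_ge u x with h' | h'
      · exact h'
      · exact absurd (hUord u1 hu1U u huU x hu1le h') hxU
  -- Left package
  have HL : ∃ (n1 : ℕ) (SL ZL : Set ℝ), SL ⊆ L ∧ ZL ⊆ L ∧ (SL = ∅ ∨ ZL = ∅) ∧
      (A ∩ L ⊆ SL) ∧ (∀ x ∈ L, x ∉ ZL → x ∉ SL → ∃ b ∈ SL, b < x) ∧
      ∀ m ≥ n1, ∀ s : ∀ t : ℝ, V t, IsSection V v J s → (∀ x ∈ I m, s x = 0) →
        ∀ x ∈ SL, ∀ u ∈ U, ∀ hxu : x ≤ u, (s x, (0 : V u)) ∈ v x u hxu := by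
    by_cases hL : (A ∩ L).Nonempty
    · obtain ⟨aM, haM, haMmax⟩ := Set.Finite.exists_maximalFor id (A ∩ L)
        (hAfin.inter_of_left L) hL
      have haMmax' : ∀ x ∈ A ∩ L, x ≤ aM := by
        intro x hx
        rcases le_total x aM with h' | h'
        · exact h'
        · exact haMmax hx h'
      have haML : aM ∈ L := haM.2
      have haMlt : ∀ u : U, aM ≤ (u : ℝ) := fun u => (haML.2.2 u u.2).le
      set C : U → Set (V aM) :=
        fun u => {x : V aM | (x, (0 : V u)) ∈ v aM u (haMlt u)} with hC
      have hmono : ∀ i j : U, -(i : ℝ) ≤ -(j : ℝ) → C j ⊆ C i := by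
        intro i j hle x hx
        have hji : (j : ℝ) ≤ i := by linarith
        exact comp_mem hv_comp (haMlt j) hji (haMlt i) hx (zero_pair hji)
      have hleast : ∃ i₀ : U, ∀ i : U, C i₀ ⊆ C i := by
        refine exists_least_aux C (fun u => -(u : ℝ)) ⟨u₀, hu₀⟩ hmono ?_
        intro f hfm hfs
        have hu : ∀ n, aM ≤ ((f n : ℝ)) := fun n => haMlt (f n)
        have hanti : Antitone (fun n => ((f n : ℝ))) := by
          intro a b hab
          have := hfm a b hab
          linarith
        obtain ⟨N, hN⟩ := (htame.2 aM).1 (fun n => ((f n) : ℝ)) hu hanti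
        have hNeq := hN (N + 1) (by omega)
        exact (hfs N).ne (Set.ext fun x =>
          ⟨fun hx => (Set.ext_iff.mp hNeq x).mp hx, fun hx => (Set.ext_iff.mp hNeq x).mpr hx⟩)
      obtain ⟨uStar, huStar⟩ := hleast
      obtain ⟨n1, hn1⟩ := Set.mem_iUnion.mp uStar.2
      refine ⟨n1, L ∩ Set.Iic aM, ∅, Set.inter_subset_left, (by simp), Or.inr rfl,
        fun x hx => ⟨hx.2, haMmax' x hx⟩, ?_, ?_⟩
      · intro x hxL _ hxS
        refine ⟨aM, ⟨haML, Set.mem_Iic.mpr le_rfl⟩, ?_⟩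
        by_contra hlt
        push_neg at hlt
        exact hxS ⟨hxL, hlt⟩
      · intro m hm s hs hs0 x hxS u huU hxu
        have hsaM : s aM ∈ C uStar := by
          have h0 : s (uStar : ℝ) = 0 := hs0 _ (hImono hm hn1)
          have hmem := hs aM (hLJ haML) (uStar : ℝ) (hUJ uStar.2) (haMlt uStar)
          rw [h0] at hmem
          exact hmem
        have hker := huStar ⟨u, huU⟩ hsaM
        have hxaM : x ≤ aM := hxS.2
        have hsx := hs x (hLJ hxS.1) aM (hLJ haML) hxaM
        exact comp_mem hv_comp hxaM (haMlt ⟨u, huU⟩) hxu hsx hker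
    · refine ⟨0, ∅, L, (by simp), Set.Subset.refl L, Or.inl rfl, ?_, ?_, ?_⟩
      · intro x hx
        exact absurd (Set.nonempty_of_mem hx) hL
      · intro x hxL hxZ _
        exact absurd hxL hxZ
      · intro m _ s _ _ x hx
        exact absurd hx (Set.notMem_empty x)
  -- Right package
  have HR : ∃ (n2 : ℕ) (SR ZR : Set ℝ), SR ⊆ R ∧ ZR ⊆ R ∧ (SR = ∅ ∨ ZR = ∅) ∧
      (A ∩ R ⊆ SR) ∧ (∀ x ∈ R, x ∉ ZR → x ∉ SR → ∃ b ∈ SR, x < b) ∧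
      ∀ m ≥ n2, ∀ s : ∀ t : ℝ, V t, IsSection V v J s → (∀ x ∈ I m, s x = 0) →
        ∀ x ∈ SR, ∀ u ∈ U, ∀ hux : u ≤ x, ((0 : V u), s x) ∈ v u x hux := by
    by_cases hR : (A ∩ R).Nonempty
    · obtain ⟨bM, hbM, hbMmin⟩ := Set.Finite.exists_minimalFor id (A ∩ R)
        (hAfin.inter_of_left R) hR
      have hbMmin' : ∀ x ∈ A ∩ R, bM ≤ x := by
        intro x hx
        rcases le_total bM x with h' | h'
        · exact h'
        · exact hbMmin hx h'
      have hbMR : bM ∈ R := hbM.2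
      have hbMgt : ∀ u : U, (u : ℝ) ≤ bM := fun u => (hbMR.2.2 u u.2).le
      set C : U → Set (V bM) :=
        fun u => {y : V bM | ((0 : V u), y) ∈ v u bM (hbMgt u)} with hC
      have hmono : ∀ i j : U, (i : ℝ) ≤ (j : ℝ) → C j ⊆ C i := by
        intro i j hle y hy
        exact comp_mem hv_comp hle (hbMgt j) (hbMgt i) (zero_pair hle) hy
      have hleast : ∃ i₀ : U, ∀ i : U, C i₀ ⊆ C i := by
        refine exists_least_aux C (fun u => (u : ℝ)) ⟨u₀, hu₀⟩ hmono ?_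
        intro f hfm hfs
        have hl : ∀ n, ((f n : ℝ)) ≤ bM := fun n => hbMgt (f n)
        obtain ⟨N, hN⟩ := (htame.2 bM).2 (fun n => ((f n) : ℝ)) hl
          (fun a b hab => hfm a b hab)
        have hNeq := hN (N + 1) (by omega)
        exact (hfs N).ne (Set.ext fun x =>
          ⟨fun hx => (Set.ext_iff.mp hNeq x).mp hx, fun hx => (Set.ext_iff.mp hNeq x).mpr hx⟩)
      obtain ⟨uStar, huStar⟩ := hleast
      obtain ⟨n2, hn2⟩ := Set.mem_iUnion.mp uStar.2
      refine ⟨n2, R ∩ Set.Ici bM, ∅, Set.inter_subset_left, (by simp), Or.inr rfl,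
        fun x hx => ⟨hx.2, hbMmin' x hx⟩, ?_, ?_⟩
      · intro x hxR _ hxS
        refine ⟨bM, ⟨hbMR, Set.mem_Ici.mpr le_rfl⟩, ?_⟩
        by_contra hlt
        push_neg at hlt
        exact hxS ⟨hxR, hlt⟩
      · intro m hm s hs hs0 x hxS u huU hux
        have hsbM : s bM ∈ C uStar := by
          have h0 : s (uStar : ℝ) = 0 := hs0 _ (hImono hm hn2)
          have hmem := hs (uStar : ℝ) (hUJ uStar.2) bM (hRJ hbMR) (hbMgt uStar)
          rw [h0] at hmem
          exact hmem
        have hker := huStar ⟨u, huU⟩ hsbM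
        have hbMx : bM ≤ x := hxS.2
        have hsx := hs bM (hRJ hbMR) x (hRJ hxS.1) hbMx
        exact comp_mem hv_comp (hbMgt ⟨u, huU⟩) hbMx hux hker hsx
    · refine ⟨0, ∅, R, (by simp), Set.Subset.refl R, Or.inl rfl, ?_, ?_, ?_⟩
      · intro x hx
        exact absurd (Set.nonempty_of_mem hx) hR
      · intro x hxR hxZ _
        exact absurd hxR hxZ
      · intro m _ s _ _ x hx
        exact absurd hx (Set.notMem_empty x)
  have HN3 : ∃ n3 : ℕ, ∀ x ∈ A ∩ U, x ∈ I n3 := by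
    have hchoice : ∀ x : ℝ, ∃ n : ℕ, x ∈ A ∩ U → x ∈ I n := by
      intro x
      by_cases hx : x ∈ A ∩ U
      · obtain ⟨n, hn⟩ := Set.mem_iUnion.mp hx.2
        exact ⟨n, fun _ => hn⟩
      · exact ⟨0, fun h => absurd h hx⟩
    choose nf hnf using hchoice
    refine ⟨(hAfin.inter_of_left U).toFinset.sup nf, fun x hx => ?_⟩
    exact hImono (Finset.le_sup ((hAfin.inter_of_left U).mem_toFinset.mpr hx)) (hnf x hx)
  obtain ⟨n1, SL, ZL, hSLL, hZLL, hdisjL, hASL, hgapL, hkeyL⟩ := HL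
  obtain ⟨n2, SR, ZR, hSRR, hZRR, hdisjR, hASR, hgapR, hkeyR⟩ := HR
  obtain ⟨n3, hn3⟩ := HN3
  refine ⟨max n1 (max n2 n3), ?_⟩
  intro m hm s hsec hs0
  have hm1 : n1 ≤ m := le_trans (le_max_left _ _) hm
  have hm2 : n2 ≤ m := le_trans (le_trans (le_max_left _ _) (le_max_right n1 _)) hm
  have hm3 : n3 ≤ m := le_trans (le_trans (le_max_right _ _) (le_max_right n1 _)) hm
  have KL := hkeyL m hm1 s hsec hs0
  have KR := hkeyR m hm2 s hsec hs0
  set B : Set ℝ := U ∪ ZL ∪ ZR ∪ SL ∪ SR with hBdef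
  set h : ∀ t : ℝ, V t := fun t => if t ∈ SL ∪ SR then s t else 0 with hhdef
  have hUB : U ⊆ B := fun x hx => Or.inl (Or.inl (Or.inl (Or.inl hx)))
  have hZLB : ZL ⊆ B := fun x hx => Or.inl (Or.inl (Or.inl (Or.inr hx)))
  have hZRB : ZR ⊆ B := fun x hx => Or.inl (Or.inl (Or.inr hx))
  have hSLB : SL ⊆ B := fun x hx => Or.inl (Or.inr hx)
  have hSRB : SR ⊆ B := fun x hx => Or.inr hx
  have hBcases : ∀ x ∈ B, x ∈ U ∨ x ∈ ZL ∨ x ∈ ZR ∨ x ∈ SL ∨ x ∈ SR := by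
    intro x hx
    rcases hx with (((hx | hx) | hx) | hx) | hx
    · exact Or.inl hx
    · exact Or.inr (Or.inl hx)
    · exact Or.inr (Or.inr (Or.inl hx))
    · exact Or.inr (Or.inr (Or.inr (Or.inl hx)))
    · exact Or.inr (Or.inr (Or.inr (Or.inr hx)))
  have hSJ : ∀ x ∈ SL ∪ SR, x ∈ J := by
    rintro x (hx | hx)
    · exact hLJ (hSLL hx)
    · exact hRJ (hSRR hx)
  have hvalS : ∀ x ∈ SL ∪ SR, h x = s x := fun x hx => if_pos hx
  have hvalZ : ∀ x, x ∉ SL ∪ SR → h x = 0 := fun x hx => if_neg hx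
  have hUnotS : ∀ x ∈ U, x ∉ SL ∪ SR := by
    rintro x hxU (hx | hx)
    · exact (hSLL hx).2.1 hxU
    · exact (hSRR hx).2.1 hxU
  have hZLnotS : ∀ x ∈ ZL, x ∉ SL ∪ SR := by
    rintro x hxZ (hx | hx)
    · rcases hdisjL with he | he
      · exact absurd (he ▸ hx) (Set.notMem_empty x)
      · exact absurd (he ▸ hxZ) (Set.notMem_empty x)
    · exact absurd (hLR x (hZLL hxZ) x (hSRR hx)) (lt_irrefl x)
  have hZRnotS : ∀ x ∈ ZR, x ∉ SL ∪ SR := by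
    rintro x hxZ (hx | hx)
    · exact absurd (hLR x (hSLL hx) x (hZRR hxZ)) (lt_irrefl x)
    · rcases hdisjR with he | he
      · exact absurd (he ▸ hx) (Set.notMem_empty x)
      · exact absurd (he ▸ hxZ) (Set.notMem_empty x)
  have hBsub : B ⊆ J := by
    intro x hx
    rcases hBcases x hx with hx | hx | hx | hx | hx
    · exact hUJ hx
    · exact hLJ (hZLL hx)
    · exact hRJ (hZRR hx)
    · exact hLJ (hSLL hx)
    · exact hRJ (hSRR hx)
  have hcomp : ∀ r ∈ B, ∀ x ∈ B, ∀ hrx : r ≤ x, (h r, h x) ∈ v r x hrx := by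
    intro r hrB x hxB hrx
    rcases hBcases r hrB with hr | hr | hr | hr | hr <;>
      rcases hBcases x hxB with hx | hx | hx | hx | hx
    -- r ∈ U
    · rw [hvalZ r (hUnotS r hr), hvalZ x (hUnotS x hx)]
      exact zero_pair hrx
    · exact absurd hrx (not_le.mpr ((hZLL hx).2.2 r hr))
    · rw [hvalZ r (hUnotS r hr), hvalZ x (hZRnotS x hx)]
      exact zero_pair hrx
    · exact absurd hrx (not_le.mpr ((hSLL hx).2.2 r hr))
    · rw [hvalZ r (hUnotS r hr), hvalS x (Or.inr hx)]
      exact KR x hx r hr hrx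
    -- r ∈ ZL
    · rw [hvalZ r (hZLnotS r hr), hvalZ x (hUnotS x hx)]
      exact zero_pair hrx
    · rw [hvalZ r (hZLnotS r hr), hvalZ x (hZLnotS x hx)]
      exact zero_pair hrx
    · rw [hvalZ r (hZLnotS r hr), hvalZ x (hZRnotS x hx)]
      exact zero_pair hrx
    · rcases hdisjL with he | he
      · exact absurd (he ▸ hx) (Set.notMem_empty x)
      · exact absurd (he ▸ hr) (Set.notMem_empty r)
    · rw [hvalZ r (hZLnotS r hr), hvalS x (Or.inr hx)]
      have hru : r ≤ u₀ := ((hZLL hr).2.2 u₀ hu₀).le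
      have hux : u₀ ≤ x := (hRU x (hSRR hx) u₀ hu₀).le
      exact comp_mem hv_comp hru hux hrx (zero_pair hru) (KR x hx u₀ hu₀ hux)
    -- r ∈ ZR
    · exact absurd hrx (not_le.mpr (hRU r (hZRR hr) x hx))
    · exact absurd hrx (not_le.mpr (hLR x (hZLL hx) r (hZRR hr)))
    · rw [hvalZ r (hZRnotS r hr), hvalZ x (hZRnotS x hx)]
      exact zero_pair hrx
    · exact absurd hrx (not_le.mpr (hLR x (hSLL hx) r (hZRR hr)))
    · rcases hdisjR with he | he
      · exact absurd (he ▸ hx) (Set.notMem_empty x)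
      · exact absurd (he ▸ hr) (Set.notMem_empty r)
    -- r ∈ SL
    · rw [hvalS r (Or.inl hr), hvalZ x (hUnotS x hx)]
      exact KL r hr x hx hrx
    · rcases hdisjL with he | he
      · exact absurd (he ▸ hr) (Set.notMem_empty r)
      · exact absurd (he ▸ hx) (Set.notMem_empty x)
    · rw [hvalS r (Or.inl hr), hvalZ x (hZRnotS x hx)]
      have hru : r ≤ u₀ := ((hSLL hr).2.2 u₀ hu₀).le
      have hux : u₀ ≤ x := (hRU x (hZRR hx) u₀ hu₀).le
      exact comp_mem hv_comp hru hux hrx (KL r hr u₀ hu₀ hru) (zero_pair hux)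
    · rw [hvalS r (Or.inl hr), hvalS x (Or.inl hx)]
      exact hsec r (hSJ r (Or.inl hr)) x (hSJ x (Or.inl hx)) hrx
    · rw [hvalS r (Or.inl hr), hvalS x (Or.inr hx)]
      exact hsec r (hSJ r (Or.inl hr)) x (hSJ x (Or.inr hx)) hrx
    -- r ∈ SR
    · exact absurd hrx (not_le.mpr (hRU r (hSRR hr) x hx))
    · exact absurd hrx (not_le.mpr (hLR x (hZLL hx) r (hSRR hr)))
    · rcases hdisjR with he | he
      · exact absurd (he ▸ hr) (Set.notMem_empty r)
      · exact absurd (he ▸ hx) (Set.notMem_empty x)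
    · exact absurd hrx (not_le.mpr (hLR x (hSLL hx) r (hSRR hr)))
    · rw [hvalS r (Or.inr hr), hvalS x (Or.inr hx)]
      exact hsec r (hSJ r (Or.inr hr)) x (hSJ x (Or.inr hx)) hrx
  have htwo : ∀ x ∈ J, x ∉ B → (∃ b ∈ B, b < x) ∧ ∃ b ∈ B, x < b := by
    intro x hxJ hxB
    have hxU : x ∉ U := fun hc => hxB (hUB hc)
    rcases htri x hxJ hxU with hxL | hxR
    · obtain ⟨b, hbS, hbx⟩ := hgapL x hxL (fun hc => hxB (hZLB hc)) (fun hc => hxB (hSLB hc))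
      exact ⟨⟨b, hSLB hbS, hbx⟩, ⟨u₀, hUB hu₀, hxL.2.2 u₀ hu₀⟩⟩
    · obtain ⟨b, hbS, hbx⟩ := hgapR x hxR (fun hc => hxB (hZRB hc)) (fun hc => hxB (hSRB hc))
      exact ⟨⟨u₀, hUB hu₀, hxR.2.2 u₀ hu₀⟩, ⟨b, hSRB hbS, hbx⟩⟩
  obtain ⟨g, hgsec, hgB⟩ := extend_section hv_id hv_comp htame J B hBsub h hcomp htwo
  refine ⟨g, hgsec, ?_, ?_⟩
  · intro x hx
    rw [hgB x (hUB hx), hvalZ x (hUnotS x hx)]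
  · intro x hxA
    by_cases hxU : x ∈ U
    · have hs0x : s x = 0 := hs0 x (hImono hm3 (hn3 x ⟨hxA, hxU⟩))
      rw [hgB x (hUB hxU), hvalZ x (hUnotS x hxU), hs0x]
    · rcases htri x (hA hxA) hxU with hxL | hxR
      · have hxSL : x ∈ SL := hASL ⟨hxA, hxL⟩
        rw [hgB x (hSLB hxSL), hvalS x (Or.inl hxSL)]
      · have hxSR : x ∈ SR := hASR ⟨hxA, hxR⟩
        rw [hgB x (hSRB hxSR), hvalS x (Or.inr hxSR)]

end
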